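/- arXiv:2304.12173 — 10 statements merged into one kernel-verified Lean document; each statement's English description precedes it below -/
import Mathlib

section
/- Let M be a metric space, let d be its metric, and define ρ = min(d, 2). Then ρ is a metric on M, and a function f : M → ℝ is Lipschitz with respect to d with the norm max(‖f‖_∞, Lip_d(f)) equal to c if and only if it is Lipschitz with respect to ρ with max(‖f‖_∞, Lip_ρ(f)) = c. In particular the spaces Lip(M,d) and Lip(M,ρ) of bounded Lipschitz functions with norm max(‖f‖_∞, ‖f‖_L) coincide isometrically. -/
/-- For a metric space `(M, d)` and `ρ = min(d, 2)`, `ρ` is a metric on `M`,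
and a bounded Lipschitz function `f : M → ℝ` has norm `max(‖f‖_∞, Lip_d f) = c` with respect
to `d` iff it does with respect to `ρ`; thus `Lip(M,d)` and `Lip(M,ρ)` coincide isometrically. -/
theorem stmt_0 {M : Type*} [MetricSpace M] (ρ : M → M → ℝ)
    (hρ : ∀ x y, ρ x y = min (dist x y) 2) :
    ((∀ x y, (ρ x y = 0 ↔ x = y)) ∧ (∀ x y, ρ x y = ρ y x) ∧
      (∀ x y z, ρ x z ≤ ρ x y + ρ y z)) ∧
    (∀ (f : M → ℝ) (c : ℝ),
      ((∃ C, ∀ x, |f x| ≤ C) ∧ (∃ K, ∀ x y, |f x - f y| ≤ K * dist x y) ∧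
        max (sSup {t : ℝ | ∃ x, t = |f x|})
          (sSup {t : ℝ | ∃ x y, x ≠ y ∧ t = |f x - f y| / dist x y}) = c) ↔
      ((∃ C, ∀ x, |f x| ≤ C) ∧ (∃ K, ∀ x y, |f x - f y| ≤ K * ρ x y) ∧
        max (sSup {t : ℝ | ∃ x, t = |f x|})
          (sSup {t : ℝ | ∃ x y, x ≠ y ∧ t = |f x - f y| / ρ x y}) = c)) := by
  have hρle : ∀ x y : M, ρ x y ≤ dist x y := fun x y => by
    rw [hρ]; exact min_le_left _ _
  have hρnn : ∀ x y : M, 0 ≤ ρ x y := fun x y => by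
    rw [hρ]; exact le_min dist_nonneg (by norm_num)
  have hρpos : ∀ x y : M, x ≠ y → 0 < ρ x y := fun x y h => by
    rw [hρ]; exact lt_min (dist_pos.mpr h) (by norm_num)
  constructor
  · refine ⟨fun x y => ?_, fun x y => by rw [hρ, hρ, dist_comm], fun x y z => ?_⟩
    · rw [hρ, ← dist_eq_zero (x := x) (y := y)]
      have hd := dist_nonneg (x := x) (y := y)
      rcases le_total (dist x y) 2 with h | h
      · rw [min_eq_left h]
      · rw [min_eq_right h]
        constructor <;> intro h' <;> linarith
    · rw [hρ, hρ, hρ]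
      rcases le_total (dist x y) 2 with a | a
      · rcases le_total (dist y z) 2 with b | b
        · rw [min_eq_left a, min_eq_left b]
          calc min (dist x z) 2 ≤ dist x z := min_le_left _ _
            _ ≤ dist x y + dist y z := dist_triangle x y z
        · rw [min_eq_right b]
          have h1 : (0:ℝ) ≤ min (dist x y) 2 := le_min dist_nonneg (by norm_num)
          have h2 := min_le_right (dist x z) 2
          linarith
      · rw [min_eq_right a]
        have h1 : (0:ℝ) ≤ min (dist y z) 2 := le_min dist_nonneg (by norm_num)
        have h2 := min_le_right (dist x z) 2
        linarith
  · intro f c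
    -- the key sup equality, under boundedness + d-Lipschitz
    have supeq : ∀ (C K : ℝ), (∀ x, |f x| ≤ C) → (∀ x y, |f x - f y| ≤ K * dist x y) →
        max (sSup {t : ℝ | ∃ x, t = |f x|})
          (sSup {t : ℝ | ∃ x y, x ≠ y ∧ t = |f x - f y| / dist x y})
        = max (sSup {t : ℝ | ∃ x, t = |f x|})
          (sSup {t : ℝ | ∃ x y, x ≠ y ∧ t = |f x - f y| / ρ x y}) := by
      intro C K hC hK
      by_cases hM : Nonempty M
      · obtain ⟨x₀⟩ := hM
        have bddS : BddAbove {t : ℝ | ∃ x, t = |f x|} := by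
          refine ⟨C, ?_⟩
          rintro t ⟨x, rfl⟩
          exact hC x
        set A := sSup {t : ℝ | ∃ x, t = |f x|} with hAdef
        have hAx : ∀ x, |f x| ≤ A := fun x => le_csSup bddS ⟨x, rfl⟩
        have hA0 : 0 ≤ A := le_trans (abs_nonneg _) (hAx x₀)
        have bddSd : BddAbove {t : ℝ | ∃ x y, x ≠ y ∧ t = |f x - f y| / dist x y} := by
          refine ⟨K, ?_⟩
          rintro t ⟨x, y, hxy, rfl⟩
          exact (div_le_iff₀ (dist_pos.mpr hxy)).mpr (hK x y)
        have bddSρ : BddAbove {t : ℝ | ∃ x y, x ≠ y ∧ t = |f x - f y| / ρ x y} := by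
          refine ⟨max K A, ?_⟩
          rintro t ⟨x, y, hxy, rfl⟩
          rcases le_total (dist x y) 2 with h | h
          · have : ρ x y = dist x y := by rw [hρ]; exact min_eq_left h
            rw [this]
            exact le_trans ((div_le_iff₀ (dist_pos.mpr hxy)).mpr (hK x y)) (le_max_left _ _)
          · have hρ2 : ρ x y = 2 := by rw [hρ]; exact min_eq_right h
            rw [hρ2]
            have habs : |f x - f y| ≤ |f x| + |f y| := abs_sub _ _
            have := hAx x; have := hAx y
            rw [div_le_iff₀ (by norm_num : (0:ℝ) < 2)]
            have : A ≤ max K A := le_max_right _ _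
            nlinarith
        apply le_antisymm
        · refine max_le (le_max_left _ _) (Real.sSup_le ?_ (le_trans hA0 (le_max_left _ _)))
          rintro t ⟨x, y, hxy, rfl⟩
          have h1 : |f x - f y| / dist x y ≤ |f x - f y| / ρ x y :=
            div_le_div_of_nonneg_left (abs_nonneg _) (hρpos x y hxy) (hρle x y)
          exact le_trans h1 (le_trans (le_csSup bddSρ ⟨x, y, hxy, rfl⟩) (le_max_right _ _))
        · refine max_le (le_max_left _ _) (Real.sSup_le ?_ (le_trans hA0 (le_max_left _ _)))
          rintro t ⟨x, y, hxy, rfl⟩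
          rcases le_total (dist x y) 2 with h | h
          · have hd : ρ x y = dist x y := by rw [hρ]; exact min_eq_left h
            rw [hd]
            exact le_trans (le_csSup bddSd ⟨x, y, hxy, rfl⟩) (le_max_right _ _)
          · have hρ2 : ρ x y = 2 := by rw [hρ]; exact min_eq_right h
            rw [hρ2]
            refine le_trans ?_ (le_max_left _ _)
            have habs : |f x - f y| ≤ |f x| + |f y| := abs_sub _ _
            have := hAx x; have := hAx y
            rw [div_le_iff₀ (by norm_num : (0:ℝ) < 2)]
            linarith
      · have hE : IsEmpty M := not_nonempty_iff.mp hM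
        have e1 : {t : ℝ | ∃ x : M, t = |f x|} = ∅ := by
          ext t; simp only [Set.mem_setOf_eq, Set.mem_empty_iff_false, iff_false]
          rintro ⟨x, -⟩; exact hE.false x
        have e2 : {t : ℝ | ∃ x y : M, x ≠ y ∧ t = |f x - f y| / dist x y} = ∅ := by
          ext t; simp only [Set.mem_setOf_eq, Set.mem_empty_iff_false, iff_false]
          rintro ⟨x, -⟩; exact hE.false x
        have e3 : {t : ℝ | ∃ x y : M, x ≠ y ∧ t = |f x - f y| / ρ x y} = ∅ := by
          ext t; simp only [Set.mem_setOf_eq, Set.mem_empty_iff_false, iff_false]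
          rintro ⟨x, -⟩; exact hE.false x
        rw [e1, e2, e3]
    constructor
    · rintro ⟨⟨C, hC⟩, ⟨K, hK⟩, hmax⟩
      refine ⟨⟨C, hC⟩, ⟨max K C, ?_⟩, ?_⟩
      · intro x y
        rcases le_total (dist x y) 2 with h | h
        · have hd : ρ x y = dist x y := by rw [hρ]; exact min_eq_left h
          rw [hd]
          exact le_trans (hK x y) (mul_le_mul_of_nonneg_right (le_max_left _ _) dist_nonneg)
        · have hρ2 : ρ x y = 2 := by rw [hρ]; exact min_eq_right h
          rw [hρ2]
          have habs : |f x - f y| ≤ |f x| + |f y| := abs_sub _ _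
          have h1 := hC x; have h2 := hC y
          have h3 : C ≤ max K C := le_max_right _ _
          have h4 : |f x| ≤ |f x| := le_refl _
          nlinarith [abs_nonneg (f x), abs_nonneg (f y)]
      · rw [← supeq C K hC hK]; exact hmax
    · rintro ⟨⟨C, hC⟩, ⟨K, hK⟩, hmax⟩
      have hKd : ∀ x y, |f x - f y| ≤ max K 0 * dist x y := by
        intro x y
        calc |f x - f y| ≤ K * ρ x y := hK x y
          _ ≤ max K 0 * ρ x y := mul_le_mul_of_nonneg_right (le_max_left _ _) (hρnn x y)
          _ ≤ max K 0 * dist x y :=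
            mul_le_mul_of_nonneg_left (hρle x y) (le_max_right _ _)
      refine ⟨⟨C, hC⟩, ⟨max K 0, hKd⟩, ?_⟩
      rw [supeq C (max K 0) hC hKd]; exact hmax
end

section
/- Let M be a pointed metric space. For every finite family of real coefficients a₁,…,aₙ and points x₁,…,xₙ ∈ M, the supremum of |∑ aᵢ f(xᵢ)| over all real-valued 1-Lipschitz functions f on M vanishing at the base point equals the supremum of |∑ aᵢ f(xᵢ)| over all complex-valued 1-Lipschitz functions f on M vanishing at the base point. -/
/-- For real coefficients `a i` and points `x i` in a pointed metric space, the sup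
of `|∑ aᵢ f(xᵢ)|` over real-valued `1`-Lipschitz functions vanishing at the base point equals the
sup over complex-valued `1`-Lipschitz functions vanishing at the base point. -/
theorem stmt_2 {M : Type*} [MetricSpace M] (o : M) (n : ℕ) (a : Fin n → ℝ) (x : Fin n → M) :
    sSup {t : ℝ | ∃ f : M → ℝ, LipschitzWith 1 f ∧ f o = 0 ∧ t = |∑ i, a i * f (x i)|} =
    sSup {t : ℝ | ∃ f : M → ℂ, LipschitzWith 1 f ∧ f o = 0 ∧ t = ‖∑ i, (a i : ℂ) * f (x i)‖} := by
  congr 1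
  ext t
  constructor
  · rintro ⟨f, hf, hfo, rfl⟩
    refine ⟨fun m => (f m : ℂ), ?_, by simp [hfo], ?_⟩
    · intro p q
      simpa using (Complex.isometry_ofReal.lipschitz.comp hf) p q
    · rw [show ∑ i, (a i : ℂ) * (f (x i) : ℂ) = ((∑ i, a i * f (x i) : ℝ) : ℂ) by push_cast; ring_nf]
      rw [Complex.norm_real]
      simp
  · rintro ⟨f, hf, hfo, rfl⟩
    set S := ∑ i, (a i : ℂ) * f (x i) with hS
    set c : ℂ := if S = 0 then 1 else (starRingEnd ℂ) S / ‖S‖ with hc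
    have hcn : ‖c‖ = 1 := by
      rw [hc]
      split_ifs with h
      · simp
      · simp [norm_div, h, norm_ne_zero_iff.mpr h]
    have hcS : (c * S).re = ‖S‖ := by
      rw [hc]
      split_ifs with h
      · simp [h]
      · have hn : (‖S‖ : ℂ) ≠ 0 := by exact_mod_cast norm_ne_zero_iff.mpr h
        have : (starRingEnd ℂ) S / ‖S‖ * S = ((‖S‖ : ℝ) : ℂ) := by
          rw [div_mul_eq_mul_div, mul_comm, Complex.mul_conj, div_eq_iff hn]
          rw [Complex.normSq_eq_norm_sq, Complex.ofReal_pow, sq]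
        rw [this]
        simp
    refine ⟨fun m => (c * f m).re, ?_, by simp [hfo], ?_⟩
    · intro p q
      have : dist ((c * f p).re) ((c * f q).re) ≤ dist (f p) (f q) := by
        rw [Real.dist_eq]
        have : (c * f p).re - (c * f q).re = (c * (f p - f q)).re := by
          simp [mul_sub]
        rw [this]
        calc |(c * (f p - f q)).re| ≤ ‖c * (f p - f q)‖ := Complex.abs_re_le_norm _
          _ = ‖f p - f q‖ := by rw [norm_mul, hcn, one_mul]
          _ = dist (f p) (f q) := (dist_eq_norm _ _).symm
      calc edist ((c * f p).re) ((c * f q).re) ≤ edist (f p) (f q) := by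
            rw [edist_dist, edist_dist]; exact ENNReal.ofReal_le_ofReal this
        _ ≤ 1 * edist p q := hf p q
    · have : ∑ i, a i * (c * f (x i)).re = (c * S).re := by
        rw [hS, Finset.mul_sum, Complex.re_sum]
        congr 1
        ext i
        simp [Complex.mul_re]
        ring
      rw [this, hcS, abs_of_nonneg (by rw [hcS] at *; positivity)]
end

section
/- Let M be a pointed metric space, let f₁, f₂ : M → ℝ be Lipschitz functions vanishing at the base point, and let f = f₁ + i f₂ : M → ℂ. Then the Lipschitz constant of f equals sup over θ ∈ [0, 2π] of the Lipschitz constant of cos(θ) f₁ + sin(θ) f₂. -/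
open Real

private lemma aux_cs (c s a b : ℝ) (h : c^2 + s^2 = 1) :
    |c*a + s*b| ≤ Real.sqrt (a^2 + b^2) := by
  rw [← Real.sqrt_sq_eq_abs]
  apply Real.sqrt_le_sqrt
  nlinarith [sq_nonneg (c*b - s*a)]

private lemma abs_complex (a b : ℝ) : ‖(a:ℂ) + b*Complex.I‖ = Real.sqrt (a^2+b^2) := by
  rw [Complex.norm_def, Complex.normSq_apply]
  simp
  congr 1
  ring

private lemma sqrt_le_abs_add_abs (a b : ℝ) : Real.sqrt (a^2+b^2) ≤ |a| + |b| := by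
  rw [show |a| + |b| = Real.sqrt ((|a| + |b|)^2) by
    rw [Real.sqrt_sq (by positivity)]]
  apply Real.sqrt_le_sqrt
  nlinarith [sq_abs a, sq_abs b, mul_nonneg (abs_nonneg a) (abs_nonneg b)]

/-- For Lipschitz `f₁ f₂ : M → ℝ` vanishing at the base point and
`f = f₁ + i f₂ : M → ℂ`, the Lipschitz constant of `f` equals
`sup_{θ ∈ [0,2π]} ‖cos θ · f₁ + sin θ · f₂‖_L`. -/
theorem stmt_3 {M : Type*} [MetricSpace M] (o : M) (f₁ f₂ : M → ℝ)
    (h₁ : ∃ K, LipschitzWith K f₁) (h₂ : ∃ K, LipschitzWith K f₂)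
    (h₁0 : f₁ o = 0) (h₂0 : f₂ o = 0) :
    sSup {t : ℝ | ∃ x y : M, x ≠ y ∧
        t = ‖((f₁ x : ℂ) + f₂ x * Complex.I) - ((f₁ y : ℂ) + f₂ y * Complex.I)‖ / dist x y} =
    sSup {t : ℝ | ∃ θ ∈ Set.Icc (0 : ℝ) (2 * π),
        t = sSup {s : ℝ | ∃ x y : M, x ≠ y ∧
          s = |(Real.cos θ * f₁ x + Real.sin θ * f₂ x) -
               (Real.cos θ * f₁ y + Real.sin θ * f₂ y)| / dist x y}} := by
  obtain ⟨K₁, hK₁⟩ := h₁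
  obtain ⟨K₂, hK₂⟩ := h₂
  set A : Set ℝ := {t : ℝ | ∃ x y : M, x ≠ y ∧
        t = ‖((f₁ x : ℂ) + f₂ x * Complex.I) - ((f₁ y : ℂ) + f₂ y * Complex.I)‖ / dist x y}
    with hA
  set B : ℝ → Set ℝ := fun θ => {s : ℝ | ∃ x y : M, x ≠ y ∧
          s = |(Real.cos θ * f₁ x + Real.sin θ * f₂ x) -
               (Real.cos θ * f₁ y + Real.sin θ * f₂ y)| / dist x y} with hB
  set C : Set ℝ := {t : ℝ | ∃ θ ∈ Set.Icc (0 : ℝ) (2 * π), t = sSup (B θ)} with hC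
  have hnorm : ∀ x y : M,
      ‖((f₁ x : ℂ) + f₂ x * Complex.I) - ((f₁ y : ℂ) + f₂ y * Complex.I)‖
        = Real.sqrt ((f₁ x - f₁ y)^2 + (f₂ x - f₂ y)^2) := by
    intro x y
    have h : ((f₁ x : ℂ) + f₂ x * Complex.I) - ((f₁ y : ℂ) + f₂ y * Complex.I)
        = ((f₁ x - f₁ y : ℝ) : ℂ) + ((f₂ x - f₂ y : ℝ)) * Complex.I := by
      push_cast; ring
    rw [h, abs_complex]
  have hlip : ∀ x y : M, |f₁ x - f₁ y| + |f₂ x - f₂ y| ≤ ((K₁:ℝ) + K₂) * dist x y := by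
    intro x y
    have h1 : |f₁ x - f₁ y| ≤ (K₁:ℝ) * dist x y := by
      simpa [Real.dist_eq] using hK₁.dist_le_mul x y
    have h2 : |f₂ x - f₂ y| ≤ (K₂:ℝ) * dist x y := by
      simpa [Real.dist_eq] using hK₂.dist_le_mul x y
    nlinarith
  have hKnn : (0:ℝ) ≤ (K₁:ℝ) + K₂ := by positivity
  -- A is bounded above
  have hbddA : BddAbove A := by
    refine ⟨(K₁:ℝ) + K₂, ?_⟩
    rintro t ⟨x, y, hxy, rfl⟩
    have hd : 0 < dist x y := dist_pos.2 hxy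
    rw [div_le_iff₀ hd, hnorm]
    exact le_trans (sqrt_le_abs_add_abs _ _) (hlip x y)
  -- each B θ bounded above, elementwise dominated by A-elements
  have hBle : ∀ θ : ℝ, ∀ s ∈ B θ, ∃ x y : M, x ≠ y ∧
      s ≤ ‖((f₁ x : ℂ) + f₂ x * Complex.I) - ((f₁ y : ℂ) + f₂ y * Complex.I)‖ / dist x y := by
    intro θ s hs
    obtain ⟨x, y, hxy, rfl⟩ := hs
    refine ⟨x, y, hxy, ?_⟩
    have hd : 0 < dist x y := dist_pos.2 hxy
    apply div_le_div_of_nonneg_right ?_ hd.le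
    · rw [hnorm]
      have : (Real.cos θ * f₁ x + Real.sin θ * f₂ x) -
               (Real.cos θ * f₁ y + Real.sin θ * f₂ y)
          = Real.cos θ * (f₁ x - f₁ y) + Real.sin θ * (f₂ x - f₂ y) := by ring
      rw [this]
      exact aux_cs _ _ _ _ (Real.cos_sq_add_sin_sq θ)
  have hBbound : ∀ θ : ℝ, ∀ s ∈ B θ, s ≤ (K₁:ℝ) + K₂ := by
    intro θ s hs
    obtain ⟨x, y, hxy, hle⟩ := hBle θ s hs
    have hd : 0 < dist x y := dist_pos.2 hxy
    refine hle.trans ?_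
    rw [div_le_iff₀ hd, hnorm]
    exact le_trans (sqrt_le_abs_add_abs _ _) (hlip x y)
  have hbddB : ∀ θ : ℝ, BddAbove (B θ) := fun θ => ⟨(K₁:ℝ) + K₂, hBbound θ⟩
  have hbddC : BddAbove C := by
    refine ⟨(K₁:ℝ) + K₂, ?_⟩
    rintro t ⟨θ, hθ, rfl⟩
    exact Real.sSup_le (hBbound θ) hKnn
  have hsupCnn : 0 ≤ sSup C := by
    have h0 : sSup (B 0) ∈ C := ⟨0, ⟨le_refl 0, by positivity⟩, rfl⟩
    have : 0 ≤ sSup (B 0) := Real.sSup_nonneg (by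
      rintro s ⟨x, y, hxy, rfl⟩
      positivity)
    exact this.trans (le_csSup hbddC h0)
  have hsupAnn : 0 ≤ sSup A := Real.sSup_nonneg (by
    rintro t ⟨x, y, hxy, rfl⟩
    positivity)
  apply le_antisymm
  · -- LHS ≤ RHS
    apply Real.sSup_le ?_ hsupCnn
    rintro t ⟨x, y, hxy, rfl⟩
    set z : ℂ := ((f₁ x : ℂ) + f₂ x * Complex.I) - ((f₁ y : ℂ) + f₂ y * Complex.I) with hz
    by_cases h0 : z = 0
    · rw [h0]; simpa using hsupCnn
    · have hre : z.re = f₁ x - f₁ y := by simp [hz]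
      have him : z.im = f₂ x - f₂ y := by simp [hz]
      set θ₀ : ℝ := Complex.arg z with hθ₀
      set θ : ℝ := if θ₀ < 0 then θ₀ + 2*π else θ₀ with hθ
      have hcos : Real.cos θ = Real.cos θ₀ := by
        rw [hθ]; split
        · rw [Real.cos_add_two_pi]
        · rfl
      have hsin : Real.sin θ = Real.sin θ₀ := by
        rw [hθ]; split
        · rw [Real.sin_add_two_pi]
        · rfl
      have hθmem : θ ∈ Set.Icc (0:ℝ) (2*π) := by
        have h1 := Complex.neg_pi_lt_arg z
        have h2 := Complex.arg_le_pi z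
        have hπ := Real.pi_pos
        rw [hθ]
        split <;> constructor <;> [skip; skip; skip; skip] <;> simp only [hθ₀] at * <;> linarith
      have hkey : ‖z‖ = Real.cos θ * (f₁ x - f₁ y) + Real.sin θ * (f₂ x - f₂ y) := by
        rw [hcos, hsin, ← hre, ← him, hθ₀]
        rw [Complex.cos_arg h0, Complex.sin_arg]
        have habs : (0:ℝ) < ‖z‖ := by
          simpa using norm_pos_iff.mpr h0
        field_simp
        rw [Complex.sq_norm, Complex.normSq_apply]
        ring
      have hd : 0 < dist x y := dist_pos.2 hxy
      have hmem : |(Real.cos θ * f₁ x + Real.sin θ * f₂ x) -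
               (Real.cos θ * f₁ y + Real.sin θ * f₂ y)| / dist x y ∈ B θ :=
        ⟨x, y, hxy, rfl⟩
      have hle1 : ‖z‖ / dist x y ≤ |(Real.cos θ * f₁ x + Real.sin θ * f₂ x) -
               (Real.cos θ * f₁ y + Real.sin θ * f₂ y)| / dist x y := by
        apply div_le_div_of_nonneg_right ?_ hd.le
        rw [hkey]
        have : Real.cos θ * (f₁ x - f₁ y) + Real.sin θ * (f₂ x - f₂ y)
            = (Real.cos θ * f₁ x + Real.sin θ * f₂ x) -
               (Real.cos θ * f₁ y + Real.sin θ * f₂ y) := by ring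
        rw [this]
        exact le_abs_self _
      have hle2 : |(Real.cos θ * f₁ x + Real.sin θ * f₂ x) -
               (Real.cos θ * f₁ y + Real.sin θ * f₂ y)| / dist x y ≤ sSup (B θ) :=
        le_csSup (hbddB θ) hmem
      have hle3 : sSup (B θ) ≤ sSup C := le_csSup hbddC ⟨θ, hθmem, rfl⟩
      exact hle1.trans (hle2.trans hle3)
  · -- RHS ≤ LHS
    apply Real.sSup_le ?_ hsupAnn
    rintro t ⟨θ, hθ, rfl⟩
    apply Real.sSup_le ?_ hsupAnn
    intro s hs
    obtain ⟨x, y, hxy, hle⟩ := hBle θ s hs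
    exact hle.trans (le_csSup hbddA ⟨x, y, hxy, rfl⟩)
end

section
/- Let M be a pointed metric space and let a, b ∈ ℝ, x, y ∈ M. Then sup{ |a f(x) + b f(y)| : f : M → ℝ 1-Lipschitz, f(0)=0 } = max{ |a d(x,0) + b d(y,0)|, |a d(x,0) + b (d(x,0) − d(x,y))|, |b d(y,0) + a (d(y,0) − d(x,y))| }. -/
private lemma key_lin (dx dy dxy u v a b : ℝ) (h1 : |u| ≤ dx) (h2 : |v| ≤ dy)
    (h3 : |u - v| ≤ dxy) :
    a * u + b * v ≤ max (max |a * dx + b * dy| |a * dx + b * (dx - dxy)|)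
      |b * dy + a * (dy - dxy)| := by
  obtain ⟨h1l, h1r⟩ := abs_le.mp h1
  obtain ⟨h2l, h2r⟩ := abs_le.mp h2
  obtain ⟨h3l, h3r⟩ := abs_le.mp h3
  rcases le_total 0 a with ha | ha <;> rcases le_total 0 b with hb | hb <;>
    rcases le_total 0 (a + b) with hab | hab
  · refine le_trans ?_ (le_max_of_le_left (le_max_of_le_left (le_abs_self _)))
    nlinarith
  · refine le_trans ?_ (le_max_of_le_left (le_max_of_le_left (le_abs_self _)))
    nlinarith
  · -- a ≥ 0, b ≤ 0, a+b ≥ 0 : use a*dx + b*(dx-dxy)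
    refine le_trans ?_ (le_max_of_le_left (le_max_of_le_right (le_abs_self _)))
    nlinarith
  · -- a ≥ 0, b ≤ 0, a+b ≤ 0 : use -(b*dy + a*(dy-dxy))
    refine le_trans ?_ (le_max_of_le_right (neg_le_abs _))
    nlinarith
  · -- a ≤ 0, b ≥ 0, a+b ≥ 0 : use b*dy + a*(dy-dxy)
    refine le_trans ?_ (le_max_of_le_right (le_abs_self _))
    nlinarith
  · -- a ≤ 0, b ≥ 0, a+b ≤ 0 : use -(a*dx + b*(dx-dxy))
    refine le_trans ?_ (le_max_of_le_left (le_max_of_le_right (neg_le_abs _)))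
    nlinarith
  · refine le_trans ?_ (le_max_of_le_left (le_max_of_le_left (neg_le_abs _)))
    nlinarith
  · refine le_trans ?_ (le_max_of_le_left (le_max_of_le_left (neg_le_abs _)))
    nlinarith

private lemma lip_const_sub {M : Type*} [PseudoMetricSpace M] (c : ℝ) {g : M → ℝ}
    (hg : LipschitzWith 1 g) : LipschitzWith 1 (fun z => c - g z) := by
  intro z w
  simpa [edist_sub_left] using hg z w

/-- Exact two-point norm formula in the real Lipschitz free space:
`‖aδ(x) + bδ(y)‖ = max{|a d(x,0)+b d(y,0)|, |a d(x,0)+b(d(x,0)−d(x,y))|,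
|b d(y,0)+a(d(y,0)−d(x,y))|}`, the norm being the sup of `|a f(x)+b f(y)|` over real
`1`-Lipschitz `f` vanishing at the base point. -/
theorem stmt_5 {M : Type*} [MetricSpace M] (o : M) (a b : ℝ) (x y : M) :
    sSup {t : ℝ | ∃ f : M → ℝ, LipschitzWith 1 f ∧ f o = 0 ∧ t = |a * f x + b * f y|} =
    max (max |a * dist x o + b * dist y o|
      |a * dist x o + b * (dist x o - dist x y)|)
      |b * dist y o + a * (dist y o - dist x y)| := by
  set S := {t : ℝ | ∃ f : M → ℝ, LipschitzWith 1 f ∧ f o = 0 ∧ t = |a * f x + b * f y|}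
  have hub : ∀ t ∈ S, t ≤ max (max |a * dist x o + b * dist y o|
      |a * dist x o + b * (dist x o - dist x y)|)
      |b * dist y o + a * (dist y o - dist x y)| := by
    rintro t ⟨f, hf, hfo, rfl⟩
    have hx : |f x| ≤ dist x o := by
      have := hf.dist_le_mul x o
      rwa [Real.dist_eq, hfo, sub_zero, NNReal.coe_one, one_mul] at this
    have hy : |f y| ≤ dist y o := by
      have := hf.dist_le_mul y o
      rwa [Real.dist_eq, hfo, sub_zero, NNReal.coe_one, one_mul] at this
    have hxy : |f x - f y| ≤ dist x y := by
      have := hf.dist_le_mul x y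
      rwa [Real.dist_eq, NNReal.coe_one, one_mul] at this
    rw [abs_le]
    constructor
    · have := key_lin (dist x o) (dist y o) (dist x y) (-f x) (-f y) a b
        (by rwa [abs_neg]) (by rwa [abs_neg]) (by rw [show -f x - -f y = -(f x - f y) by ring, abs_neg]; exact hxy)
      linarith
    · exact key_lin _ _ _ _ _ a b hx hy hxy
  have hbdd : BddAbove S := ⟨_, hub⟩
  refine le_antisymm (Real.sSup_le hub (le_max_of_le_right (abs_nonneg _))) ?_
  have mem1 : |a * dist x o + b * dist y o| ∈ S :=
    ⟨fun z => dist z o, LipschitzWith.dist_left o, by simp, by simp⟩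
  have mem2 : |a * dist x o + b * (dist x o - dist x y)| ∈ S := by
    refine ⟨fun z => dist x o - dist z x, lip_const_sub _ (LipschitzWith.dist_left x), by
      simp [dist_comm], ?_⟩
    simp [dist_comm x y]
  have mem3 : |b * dist y o + a * (dist y o - dist x y)| ∈ S := by
    refine ⟨fun z => dist y o - dist z y, lip_const_sub _ (LipschitzWith.dist_left y), by
      simp [dist_comm], ?_⟩
    rw [show b * dist y o + a * (dist y o - dist x y)
        = a * (dist y o - dist x y) + b * dist y o by ring]
    simp
  exact max_le (max_le (le_csSup hbdd mem1) (le_csSup hbdd mem2)) (le_csSup hbdd mem3)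
end

section
/- Let M, N be pointed metric spaces, w : M → ℂ and f : M → N maps with f(0_M) = 0_N or w(0_M) = 0. For x ≠ y define σ(x,y) = (d(f(x),f(y))/d(x,y))·(s(x,y)|w(x)| + s(y,x)|w(y)|), where s(x,y) = 1 if d(f(x),0) ≥ d(f(y),0) and 0 otherwise; τ(x,y) = (|w(x)−w(y)|/d(x,y))·min(d(f(x),0), d(f(y),0)); A(x,y) = |w(x)d(f(x),0) − w(y)d(f(y),0)|/d(x,y); B(x,y) = |w(x)d(f(x),0) − w(y)(d(f(x),0) − d(f(x),f(y)))|/d(x,y). Then for all x ≠ y: (i) σ(x,y) ≤ 2(A(x,y) + max(B(x,y), B(y,x))); (ii) τ(x,y) ≤ A(x,y) + σ(x,y); (iii) A(x,y) ≤ σ(x,y) + τ(x,y); (iv) max(B(x,y), B(y,x)) ≤ A(x,y) + 2σ(x,y). -/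
lemma stmt8_aux (a b δ : ℝ) (u v : ℂ) (hb : 0 ≤ b) (hba : b ≤ a)
    (h1 : a - b ≤ δ) (h2 : δ ≤ a + b) :
    δ * ‖u‖ ≤ ‖u * (a:ℂ) - v * (b:ℂ)‖ + ‖v * (b:ℂ) - u * ((b:ℂ) - (δ:ℂ))‖ ∧
    ‖u - v‖ * b ≤ ‖u * (a:ℂ) - v * (b:ℂ)‖ + δ * ‖u‖ ∧
    ‖u * (a:ℂ) - v * (b:ℂ)‖ ≤ δ * ‖u‖ + ‖u - v‖ * b ∧
    ‖u * (a:ℂ) - v * ((a:ℂ) - (δ:ℂ))‖ ≤ δ * ‖u‖ + ‖u - v‖ * b ∧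
    ‖v * (b:ℂ) - u * ((b:ℂ) - (δ:ℂ))‖ ≤ δ * ‖u‖ + ‖u - v‖ * b := by
  have hδ : 0 ≤ δ := by linarith
  have nu := norm_nonneg u
  have nuv := norm_nonneg (u - v)
  have key : ∀ r : ℝ, ∀ z : ℂ, ‖z * (r:ℂ)‖ = ‖z‖ * |r| := by
    intro r z; rw [norm_mul, Complex.norm_real, Real.norm_eq_abs]
  refine ⟨?_, ?_, ?_, ?_, ?_⟩
  · calc δ * ‖u‖ ≤ ‖u‖ * |a - b + δ| := by
          rw [abs_of_nonneg (by linarith)]; nlinarith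
      _ = ‖u * ((a - b + δ : ℝ) : ℂ)‖ := (key _ _).symm
      _ = ‖(u * (a:ℂ) - v * (b:ℂ)) + (v * (b:ℂ) - u * ((b:ℂ) - (δ:ℂ)))‖ := by
          congr 1; push_cast; ring
      _ ≤ _ := norm_add_le _ _
  · calc ‖u - v‖ * b = ‖(u - v) * ((b:ℝ) : ℂ)‖ := by
          rw [key, abs_of_nonneg hb]
      _ = ‖(u * (a:ℂ) - v * (b:ℂ)) - u * ((a - b : ℝ) : ℂ)‖ := by
          congr 1; push_cast; ring
      _ ≤ ‖u * (a:ℂ) - v * (b:ℂ)‖ + ‖u * ((a - b : ℝ) : ℂ)‖ := norm_sub_le _ _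
      _ ≤ _ := by rw [key, abs_of_nonneg (by linarith)]; nlinarith
  · calc ‖u * (a:ℂ) - v * (b:ℂ)‖
        = ‖u * ((a - b : ℝ) : ℂ) + (u - v) * ((b:ℝ) : ℂ)‖ := by congr 1; push_cast; ring
      _ ≤ ‖u * ((a - b : ℝ) : ℂ)‖ + ‖(u - v) * ((b:ℝ) : ℂ)‖ := norm_add_le _ _
      _ ≤ _ := by
          rw [key, key, abs_of_nonneg (by linarith), abs_of_nonneg hb]; nlinarith
  · calc ‖u * (a:ℂ) - v * ((a:ℂ) - (δ:ℂ))‖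
        = ‖u * ((δ:ℝ) : ℂ) + (u - v) * ((a - δ : ℝ) : ℂ)‖ := by congr 1; push_cast; ring
      _ ≤ ‖u * ((δ:ℝ) : ℂ)‖ + ‖(u - v) * ((a - δ : ℝ) : ℂ)‖ := norm_add_le _ _
      _ ≤ _ := by
          rw [key, key, abs_of_nonneg hδ]
          have : |a - δ| ≤ b := abs_le.mpr ⟨by linarith, by linarith⟩
          nlinarith
  · calc ‖v * (b:ℂ) - u * ((b:ℂ) - (δ:ℂ))‖
        = ‖u * ((δ:ℝ) : ℂ) - (u - v) * ((b:ℝ) : ℂ)‖ := by congr 1; push_cast; ring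
      _ ≤ ‖u * ((δ:ℝ) : ℂ)‖ + ‖(u - v) * ((b:ℝ) : ℂ)‖ := norm_sub_le _ _
      _ ≤ _ := by rw [key, key, abs_of_nonneg hδ, abs_of_nonneg hb]; linarith

lemma stmt8_case (D a b δ : ℝ) (hD : 0 < D) (u v : ℂ) (hb : 0 ≤ b) (hba : b ≤ a)
    (h1 : a - b ≤ δ) (h2 : δ ≤ a + b) (c : ℝ) (hc : c = 0 ∨ (c = 1 ∧ a ≤ b)) :
    δ / D * (1 * ‖u‖ + c * ‖v‖) ≤
      2 * (‖u * (a:ℂ) - v * (b:ℂ)‖ / D +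
        max (‖u * (a:ℂ) - v * ((a:ℂ) - (δ:ℂ))‖ / D) (‖v * (b:ℂ) - u * ((b:ℂ) - (δ:ℂ))‖ / D)) ∧
    ‖u - v‖ / D * b ≤ ‖u * (a:ℂ) - v * (b:ℂ)‖ / D + δ / D * (1 * ‖u‖ + c * ‖v‖) ∧
    ‖u * (a:ℂ) - v * (b:ℂ)‖ / D ≤ δ / D * (1 * ‖u‖ + c * ‖v‖) + ‖u - v‖ / D * b ∧
    max (‖u * (a:ℂ) - v * ((a:ℂ) - (δ:ℂ))‖ / D) (‖v * (b:ℂ) - u * ((b:ℂ) - (δ:ℂ))‖ / D) ≤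
      ‖u * (a:ℂ) - v * (b:ℂ)‖ / D + 2 * (δ / D * (1 * ‖u‖ + c * ‖v‖)) := by
  obtain ⟨e1, e2, e3, e4, e5⟩ := stmt8_aux a b δ u v hb hba h1 h2
  have hdiv : ∀ p q : ℝ, p ≤ q → p / D ≤ q / D := fun p q h =>
    div_le_div_of_nonneg_right h hD.le
  set A := ‖u * (a:ℂ) - v * (b:ℂ)‖ / D with hA
  set P := ‖u * (a:ℂ) - v * ((a:ℂ) - (δ:ℂ))‖ / D with hP
  set Q := ‖v * (b:ℂ) - u * ((b:ℂ) - (δ:ℂ))‖ / D with hQ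
  have d1 : δ * ‖u‖ / D ≤ A + Q := by
    rw [hA, hQ, ← add_div]; exact hdiv _ _ e1
  have d2 : ‖u - v‖ * b / D ≤ A + δ * ‖u‖ / D := by
    rw [hA, ← add_div]; exact hdiv _ _ e2
  have d3 : A ≤ δ * ‖u‖ / D + ‖u - v‖ * b / D := by
    rw [hA, ← add_div]; exact hdiv _ _ e3
  have d4 : P ≤ δ * ‖u‖ / D + ‖u - v‖ * b / D := by
    rw [hP, ← add_div]; exact hdiv _ _ e4
  have d5 : Q ≤ δ * ‖u‖ / D + ‖u - v‖ * b / D := by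
    rw [hQ, ← add_div]; exact hdiv _ _ e5
  have hPM : P ≤ max P Q := le_max_left _ _
  have hQM : Q ≤ max P Q := le_max_right _ _
  have hA0 : 0 ≤ A := by rw [hA]; positivity
  have hP0 : 0 ≤ P := by rw [hP]; positivity
  have hQ0 : 0 ≤ Q := by rw [hQ]; positivity
  have lhs_eq : δ / D * (1 * ‖u‖ + c * ‖v‖) = δ * ‖u‖ / D + c * (δ * ‖v‖ / D) := by ring
  have tau_eq : ‖u - v‖ / D * b = ‖u - v‖ * b / D := by ring
  rcases hc with rfl | ⟨rfl, hab⟩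
  · rw [lhs_eq, tau_eq]
    refine ⟨by linarith, by linarith, by linarith, max_le (by linarith) (by linarith)⟩
  · -- a = b case: also bound δ‖v‖
    obtain ⟨f1, -, -, -, -⟩ := stmt8_aux b a δ v u (hb.trans hba) hab (by linarith) (by linarith)
    have f1' : δ * ‖v‖ ≤ ‖u * (a:ℂ) - v * (b:ℂ)‖ + ‖u * (a:ℂ) - v * ((a:ℂ) - (δ:ℂ))‖ := by
      rwa [norm_sub_rev (v * (b:ℂ))] at f1
    have d1' : δ * ‖v‖ / D ≤ A + P := by
      rw [hA, hP, ← add_div]; exact hdiv _ _ f1'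
    have hv0 : 0 ≤ δ * ‖v‖ / D := div_nonneg (mul_nonneg (by linarith) (norm_nonneg v)) hD.le
    rw [lhs_eq, tau_eq]
    refine ⟨by linarith, by linarith, by linarith, max_le (by linarith) (by linarith)⟩
/-- The four inequalities of Lemma `inequalities` relating the quantities
`σ, τ, A, B` associated to a weight `w : M → ℂ` and a map `f : M → N` between pointed metric
spaces. -/
theorem stmt_8 {M N : Type*} [MetricSpace M] [MetricSpace N] (oM : M) (oN : N)
    (w : M → ℂ) (f : M → N) (h0 : f oM = oN ∨ w oM = 0)
    (s : M → M → ℝ) (hs : ∀ x y, s x y = if dist (f y) oN ≤ dist (f x) oN then 1 else 0)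
    (σ τ A B : M → M → ℝ)
    (hσ : ∀ x y, σ x y = dist (f x) (f y) / dist x y * (s x y * ‖w x‖ + s y x * ‖w y‖))
    (hτ : ∀ x y, τ x y = ‖w x - w y‖ / dist x y * min (dist (f x) oN) (dist (f y) oN))
    (hA : ∀ x y, A x y = ‖w x * (dist (f x) oN : ℂ) - w y * (dist (f y) oN : ℂ)‖ / dist x y)
    (hB : ∀ x y, B x y = ‖w x * (dist (f x) oN : ℂ) -
        w y * ((dist (f x) oN : ℂ) - (dist (f x) (f y) : ℂ))‖ / dist x y) :
    ∀ x y : M, x ≠ y →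
      σ x y ≤ 2 * (A x y + max (B x y) (B y x)) ∧
      τ x y ≤ A x y + σ x y ∧
      A x y ≤ σ x y + τ x y ∧
      max (B x y) (B y x) ≤ A x y + 2 * σ x y := by
  intro x y hxy
  have hD : 0 < dist x y := dist_pos.mpr hxy
  have hd1 : |dist (f x) oN - dist (f y) oN| ≤ dist (f x) (f y) := abs_dist_sub_le _ _ _
  have hd2 : dist (f x) (f y) ≤ dist (f x) oN + dist (f y) oN := dist_triangle_right _ _ _
  rcases le_total (dist (f y) oN) (dist (f x) oN) with hba | hab
  · -- case dist (f y) oN ≤ dist (f x) oN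
    have hsxy : s x y = 1 := by rw [hs]; exact if_pos hba
    have hc : s y x = 0 ∨ (s y x = 1 ∧ dist (f x) oN ≤ dist (f y) oN) := by
      rw [hs]; split
      · exact Or.inr ⟨rfl, by assumption⟩
      · exact Or.inl rfl
    rw [hσ x y, hτ x y, hA x y, hB x y, hB y x, hsxy, min_eq_right hba,
      dist_comm y x, dist_comm (f y) (f x)]
    exact stmt8_case (dist x y) (dist (f x) oN) (dist (f y) oN) (dist (f x) (f y)) hD
      (w x) (w y) dist_nonneg hba ((abs_le.mp hd1).2) hd2 (s y x) hc
  · -- case dist (f x) oN ≤ dist (f y) oN : apply swapped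
    have hsyx : s y x = 1 := by rw [hs]; exact if_pos hab
    have hc : s x y = 0 ∨ (s x y = 1 ∧ dist (f y) oN ≤ dist (f x) oN) := by
      rw [hs]; split
      · exact Or.inr ⟨rfl, by assumption⟩
      · exact Or.inl rfl
    obtain ⟨G1, G2, G3, G4⟩ := stmt8_case (dist x y) (dist (f y) oN) (dist (f x) oN)
      (dist (f x) (f y)) hD (w y) (w x) dist_nonneg hab
      (by rw [abs_sub_comm] at hd1; exact (abs_le.mp hd1).2) (by linarith) (s x y) hc
    rw [hσ x y, hτ x y, hA x y, hB x y, hB y x, hsyx, min_eq_left hab,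
      dist_comm y x, dist_comm (f y) (f x)]
    rw [norm_sub_rev (w y * (dist (f y) oN : ℂ)) (w x * (dist (f x) oN : ℂ))] at G1 G2 G3 G4
    rw [norm_sub_rev (w y) (w x)] at G2 G3
    rw [max_comm] at G1 G4
    rw [show (1:ℝ) * ‖w y‖ + s x y * ‖w x‖ = s x y * ‖w x‖ + 1 * ‖w y‖ from by ring]
      at G1 G2 G3 G4
    exact ⟨G1, G2, G3, G4⟩
end

section
/- Let M, N be pointed metric spaces, w : M → ℂ and f : M → N with f(0_M) = 0_N or w(0_M) = 0. Suppose the map φ : M → F(N), φ(x) = w(x)·δ(f(x)), is Lipschitz (with F(N) the complex Lipschitz free space over N). If N₁ := sup_{x≠y} |w(x)|·d(f(x),f(y))/d(x,y) < ∞, then N₂ := sup_{x≠y} d(f(x),0)·|w(x)−w(y)|/d(x,y) < ∞, and conversely. -/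
/-- If `φ : x ↦ w(x)δ(f(x))` is Lipschitz into the complex Lipschitz free space
over `N` (the distance `‖φ(x) − φ(y)‖` being the sup over `1`-Lipschitz `g : N → ℂ` vanishing
at the base point of `|w(x)g(f(x)) − w(y)g(f(y))|`), then
`N₁ = sup_{x≠y} |w(x)| d(f(x),f(y))/d(x,y) < ∞` iff
`N₂ = sup_{x≠y} d(f(x),0) |w(x)−w(y)|/d(x,y) < ∞`. -/
theorem stmt_9 {M N : Type*} [MetricSpace M] [MetricSpace N] (oM : M) (oN : N)
    (w : M → ℂ) (f : M → N) (h0 : f oM = oN ∨ w oM = 0)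
    (hφ : ∃ K : ℝ, 0 ≤ K ∧ ∀ x y : M,
      sSup {t : ℝ | ∃ g : N → ℂ, LipschitzWith 1 g ∧ g oN = 0 ∧
        t = ‖w x * g (f x) - w y * g (f y)‖} ≤ K * dist x y) :
    (∃ C : ℝ, ∀ x y : M, x ≠ y → ‖w x‖ * dist (f x) (f y) / dist x y ≤ C) ↔
    (∃ C : ℝ, ∀ x y : M, x ≠ y → dist (f x) oN * ‖w x - w y‖ / dist x y ≤ C) := by
  obtain ⟨K, hK0, hK⟩ := hφ
  have key : ∀ (x y : M) (g : N → ℂ), LipschitzWith 1 g → g oN = 0 →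
      ‖w x * g (f x) - w y * g (f y)‖ ≤ K * dist x y := by
    intro x y g hg hg0
    have hbdd : BddAbove {t : ℝ | ∃ g : N → ℂ, LipschitzWith 1 g ∧ g oN = 0 ∧
        t = ‖w x * g (f x) - w y * g (f y)‖} := by
      refine ⟨‖w x‖ * dist (f x) oN + ‖w y‖ * dist (f y) oN, ?_⟩
      rintro t ⟨g', hg', hg'0, rfl⟩
      have hb : ∀ z : N, ‖g' z‖ ≤ dist z oN := by
        intro z
        have := hg'.dist_le_mul z oN
        simpa [hg'0, dist_eq_norm] using this
      calc ‖w x * g' (f x) - w y * g' (f y)‖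
          ≤ ‖w x * g' (f x)‖ + ‖w y * g' (f y)‖ := norm_sub_le _ _
        _ ≤ ‖w x‖ * dist (f x) oN + ‖w y‖ * dist (f y) oN := by
            rw [norm_mul, norm_mul]
            gcongr
            · exact hb _
            · exact hb _
    exact le_trans (le_csSup hbdd ⟨g, hg, hg0, rfl⟩) (hK x y)
  constructor
  · rintro ⟨C, hC⟩
    refine ⟨K + C, fun x y hxy => ?_⟩
    have hd : (0:ℝ) < dist x y := dist_pos.2 hxy
    rw [div_le_iff₀ hd]
    set a : ℝ := dist (f x) oN with ha
    set b : ℝ := dist (f y) oN with hb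
    have hg : LipschitzWith 1 (fun z : N => ((dist z oN : ℝ) : ℂ)) := by
      refine LipschitzWith.of_dist_le_mul fun p q => ?_
      rw [Complex.isometry_ofReal.dist_eq, NNReal.coe_one, one_mul, Real.dist_eq]
      exact abs_dist_sub_le p q oN
    have h1 : ‖w x * ((a : ℝ) : ℂ) - w y * ((b : ℝ) : ℂ)‖ ≤ K * dist x y := by
      simpa using key x y _ hg (by simp)
    have h2 : ‖w y‖ * dist (f y) (f x) ≤ C * dist x y := by
      have := hC y x hxy.symm
      rw [div_le_iff₀ (by rwa [dist_comm] at hd)] at this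
      rwa [dist_comm y x] at this
    have hsplit : (w x - w y) * ((a : ℝ) : ℂ)
        = (w x * ((a : ℝ) : ℂ) - w y * ((b : ℝ) : ℂ)) + w y * (((b - a : ℝ)) : ℂ) := by
      push_cast; ring
    calc a * ‖w x - w y‖ = ‖(w x - w y) * ((a : ℝ) : ℂ)‖ := by
          rw [norm_mul, Complex.norm_real, Real.norm_eq_abs,
            abs_of_nonneg dist_nonneg, mul_comm]
      _ ≤ ‖w x * ((a : ℝ) : ℂ) - w y * ((b : ℝ) : ℂ)‖ + ‖w y * (((b - a : ℝ)) : ℂ)‖ := by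
          rw [hsplit]; exact norm_add_le _ _
      _ ≤ K * dist x y + C * dist x y := by
          refine add_le_add h1 ?_
          calc ‖w y * (((b - a : ℝ)) : ℂ)‖ = ‖w y‖ * |b - a| := by
                  rw [norm_mul, Complex.norm_real, Real.norm_eq_abs]
              _ ≤ ‖w y‖ * dist (f y) (f x) := by
                  gcongr
                  exact abs_dist_sub_le (f y) (f x) oN
              _ ≤ C * dist x y := h2
      _ = (K + C) * dist x y := by ring
  · rintro ⟨C, hC⟩
    refine ⟨K + C, fun x y hxy => ?_⟩
    have hd : (0:ℝ) < dist x y := dist_pos.2 hxy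
    rw [div_le_iff₀ hd]
    set b : ℝ := dist oN (f y) with hb
    have hg : LipschitzWith 1 (fun z : N => (((dist z (f y) - dist oN (f y) : ℝ)) : ℂ)) := by
      refine LipschitzWith.of_dist_le_mul fun p q => ?_
      rw [Complex.isometry_ofReal.dist_eq, NNReal.coe_one, one_mul, Real.dist_eq, sub_sub_sub_cancel_right]
      exact abs_dist_sub_le p q (f y)
    have h1 : ‖w x * (((dist (f x) (f y) - b : ℝ)) : ℂ) - w y * (((0 - b : ℝ)) : ℂ)‖
        ≤ K * dist x y := by
      simpa using key x y _ hg (by simp)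
    have h2 : dist (f y) oN * ‖w x - w y‖ ≤ C * dist x y := by
      have := hC y x hxy.symm
      rw [div_le_iff₀ (by rwa [dist_comm] at hd)] at this
      rwa [dist_comm y x, norm_sub_rev] at this
    have hsplit : w x * (((dist (f x) (f y) : ℝ)) : ℂ)
        = (w x * (((dist (f x) (f y) - b : ℝ)) : ℂ) - w y * (((0 - b : ℝ)) : ℂ))
          + (w x - w y) * ((b : ℝ) : ℂ) := by
      push_cast; ring
    calc ‖w x‖ * dist (f x) (f y) = ‖w x * (((dist (f x) (f y) : ℝ)) : ℂ)‖ := by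
          rw [norm_mul, Complex.norm_real, Real.norm_eq_abs, abs_of_nonneg dist_nonneg]
      _ ≤ ‖w x * (((dist (f x) (f y) - b : ℝ)) : ℂ) - w y * (((0 - b : ℝ)) : ℂ)‖
            + ‖(w x - w y) * ((b : ℝ) : ℂ)‖ := by
          rw [hsplit]; exact norm_add_le _ _
      _ ≤ K * dist x y + C * dist x y := by
          refine add_le_add h1 ?_
          calc ‖(w x - w y) * ((b : ℝ) : ℂ)‖ = ‖w x - w y‖ * b := by
                  rw [norm_mul, Complex.norm_real, Real.norm_eq_abs,
                    abs_of_nonneg dist_nonneg]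
              _ = dist (f y) oN * ‖w x - w y‖ := by rw [hb, dist_comm, mul_comm]
              _ ≤ C * dist x y := h2
      _ = (K + C) * dist x y := by ring
end

section
/- Let M, N be pointed metric spaces, w : M → ℂ and f : M → N with f(0_M) = 0_N or w(0_M) = 0. If sup_{x≠y} |w(x)|·d(f(x),f(y))/d(x,y) < ∞ and sup_{x≠y} d(f(x),0)·|w(x)−w(y)|/d(x,y) < ∞, then the map φ : M → F(N), φ(x) = w(x)δ(f(x)), is Lipschitz. -/
/-- If `sup_{x≠y} |w(x)| d(f(x),f(y))/d(x,y) < ∞` and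
`sup_{x≠y} d(f(x),0)|w(x)−w(y)|/d(x,y) < ∞`, then `φ : x ↦ w(x)δ(f(x))` is Lipschitz into the
complex Lipschitz free space over `N` (the distance `‖φ(x) − φ(y)‖` being the sup over
`1`-Lipschitz `g : N → ℂ` vanishing at the base point of `|w(x)g(f(x)) − w(y)g(f(y))|`). -/
theorem stmt_10 {M N : Type*} [MetricSpace M] [MetricSpace N] (oM : M) (oN : N)
    (w : M → ℂ) (f : M → N) (h0 : f oM = oN ∨ w oM = 0)
    (hN₁ : ∃ C : ℝ, ∀ x y : M, x ≠ y → ‖w x‖ * dist (f x) (f y) / dist x y ≤ C)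
    (hN₂ : ∃ C : ℝ, ∀ x y : M, x ≠ y → dist (f x) oN * ‖w x - w y‖ / dist x y ≤ C) :
    ∃ K : ℝ, 0 ≤ K ∧ ∀ x y : M,
      sSup {t : ℝ | ∃ g : N → ℂ, LipschitzWith 1 g ∧ g oN = 0 ∧
        t = ‖w x * g (f x) - w y * g (f y)‖} ≤ K * dist x y := by
  obtain ⟨C₁, hC₁⟩ := hN₁
  obtain ⟨C₂, hC₂⟩ := hN₂
  refine ⟨max (C₁ + C₂) 0, le_max_right _ _, fun x y => ?_⟩
  rcases eq_or_ne x y with rfl | hxy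
  · have : (max (C₁ + C₂) 0) * dist x x = 0 := by simp
    rw [this]
    apply Real.sSup_le _ le_rfl
    rintro t ⟨g, _, _, rfl⟩
    simp
  · have hd : 0 < dist x y := dist_pos.mpr hxy
    apply Real.sSup_le _ (by positivity)
    rintro t ⟨g, hg, hg0, rfl⟩
    have h1 : ‖w x * g (f x) - w y * g (f y)‖
        ≤ ‖w y‖ * dist (f x) (f y) + dist (f x) oN * ‖w x - w y‖ := by
      have heq : w x * g (f x) - w y * g (f y)
          = w y * (g (f x) - g (f y)) + (w x - w y) * g (f x) := by ring
      rw [heq]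
      refine (norm_add_le _ _).trans ?_
      gcongr
      · rw [norm_mul]
        gcongr
        have := hg.dist_le_mul (f x) (f y)
        simpa [Complex.dist_eq] using this
      · rw [norm_mul, mul_comm]
        gcongr
        have := hg.dist_le_mul (f x) oN
        simpa [Complex.dist_eq, hg0] using this
    have h2 : ‖w y‖ * dist (f y) (f x) ≤ C₁ * dist x y := by
      have := hC₁ y x hxy.symm
      rw [div_le_iff₀ (by rwa [dist_comm])] at this
      rwa [dist_comm y x] at this
    have h3 : dist (f x) oN * ‖w x - w y‖ ≤ C₂ * dist x y := by
      have := hC₂ x y hxy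
      rwa [div_le_iff₀ hd] at this
    calc ‖w x * g (f x) - w y * g (f y)‖
        ≤ ‖w y‖ * dist (f x) (f y) + dist (f x) oN * ‖w x - w y‖ := h1
      _ = ‖w y‖ * dist (f y) (f x) + dist (f x) oN * ‖w x - w y‖ := by rw [dist_comm]
      _ ≤ C₁ * dist x y + C₂ * dist x y := add_le_add h2 h3
      _ = (C₁ + C₂) * dist x y := by ring
      _ ≤ max (C₁ + C₂) 0 * dist x y := by gcongr; exact le_max_left _ _
end

section
/- Let M, N be pointed metric spaces and suppose the weighted composition operator wC_f : Lip₀(N) → Lip₀(M), g ↦ w·(g∘f), is bounded. Then wC_f is injective if and only if f(coz(w)) ∪ {0_N} is dense in N, where coz(w) = {x ∈ M : w(x) ≠ 0}. -/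
open NNReal

/-- A bounded weighted composition operator `wC_f : Lip₀(N) → Lip₀(M)`,
`g ↦ w · (g ∘ f)`, is injective iff `f(coz(w)) ∪ {0_N}` is dense in `N`. -/
theorem stmt_12 {M N : Type*} [MetricSpace M] [MetricSpace N] (oM : M) (oN : N)
    (w : M → ℂ) (f : M → N) (h0 : f oM = oN ∨ w oM = 0)
    (hbdd : ∃ C : ℝ≥0, ∀ (g : N → ℂ) (K : ℝ≥0), LipschitzWith K g → g oN = 0 →
      LipschitzWith (C * K) (fun x => w x * g (f x))) :
    (∀ g : N → ℂ, (∃ K, LipschitzWith K g) → g oN = 0 →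
        (∀ x : M, w x * g (f x) = 0) → ∀ y : N, g y = 0) ↔
      Dense (f '' {x : M | w x ≠ 0} ∪ {oN}) := by
  constructor
  · intro hinj
    by_contra hnd
    rw [Metric.dense_iff] at hnd
    push_neg at hnd
    obtain ⟨y₀, ε, hε, hball⟩ := hnd
    set g : N → ℂ := fun z => ((max 0 (ε - dist z y₀) : ℝ) : ℂ) with hg
    have hlip : LipschitzWith 1 g := by
      have h1 : LipschitzWith 1 (fun z : N => max 0 (ε - dist z y₀)) := by
        have : LipschitzWith (max 0 (0 + 1)) (fun z : N => max 0 (ε - dist z y₀)) :=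
          (LipschitzWith.const 0).max ((LipschitzWith.const ε).sub (LipschitzWith.dist_left y₀))
        simpa using this
      simpa [g, Function.comp_def] using Complex.isometry_ofReal.lipschitz.comp h1
    have hg0 : g oN = 0 := by
      have : oN ∉ Metric.ball y₀ ε := fun h => Set.eq_empty_iff_forall_notMem.mp hball oN ⟨h, Or.inr rfl⟩
      simp only [Metric.mem_ball, not_lt] at this
      have : ε - dist oN y₀ ≤ 0 := by linarith
      simp [hg, max_eq_left this]
    have hzero : ∀ x : M, w x * g (f x) = 0 := by
      intro x
      by_cases hw : w x = 0
      · simp [hw]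
      · have : f x ∉ Metric.ball y₀ ε := fun h =>
          Set.eq_empty_iff_forall_notMem.mp hball (f x) ⟨h, Or.inl ⟨x, hw, rfl⟩⟩
        simp only [Metric.mem_ball, not_lt] at this
        have : ε - dist (f x) y₀ ≤ 0 := by linarith
        simp [hg, max_eq_left this]
    have := hinj g ⟨1, hlip⟩ hg0 hzero y₀
    simp [hg] at this
    linarith
  · intro hd g hlip hg0 hz y
    obtain ⟨K, hK⟩ := hlip
    have hEq : Set.EqOn g 0 (f '' {x : M | w x ≠ 0} ∪ {oN}) := by
      rintro z (⟨x, hx, rfl⟩ | hz')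
      · have := hz x
        exact (mul_eq_zero.mp this).resolve_left hx
      · simp only [Set.mem_singleton_iff] at hz'
        subst hz'; exact hg0
    have := Continuous.ext_on hd hK.continuous continuous_const hEq
    exact congrFun this y
end

section
/- Let M be a complete pointed metric space and let γ ∈ F(M,ℂ). Define the conjugate element γ̄ ∈ F(M,ℂ) by ⟨f, γ̄⟩ = conj(⟨conj∘f, γ⟩), and Re(γ) = (γ + γ̄)/2, Im(γ) = (γ − γ̄)/(2i). Then supp(γ) = supp(Re(γ)) ∪ supp(Im(γ)). -/
/-- `(V, δ)` is (a realization of) the complex Lipschitz free space over the pointed metric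
space `M` with base point `o`. -/
def IsFreeSpace {M V : Type*} [MetricSpace M] [NormedAddCommGroup V] [NormedSpace ℂ V]
    (o : M) (δ : M → V) : Prop :=
  (∀ (n : ℕ) (a : Fin n → ℂ) (x : Fin n → M),
    ‖∑ i, a i • δ (x i)‖ =
      sSup {t : ℝ | ∃ g : M → ℂ, LipschitzWith 1 g ∧ g o = 0 ∧ t = ‖∑ i, a i * g (x i)‖}) ∧
  Dense (↑(Submodule.span ℂ (Set.range δ)) : Set V)

/-- `S` is the support of `γ`: the smallest closed `K ⊆ M` with `γ` in the closed span of
`δ(K)`. -/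
def IsSupport {M V : Type*} [MetricSpace M] [NormedAddCommGroup V] [NormedSpace ℂ V]
    (δ : M → V) (γ : V) (S : Set M) : Prop :=
  IsClosed S ∧ γ ∈ (Submodule.span ℂ (δ '' S)).topologicalClosure ∧
  ∀ K : Set M, IsClosed K → γ ∈ (Submodule.span ℂ (δ '' K)).topologicalClosure → S ⊆ K

section Aux

variable {M V : Type*} [MetricSpace M] [NormedAddCommGroup V] [NormedSpace ℂ V]
  {o : M} {δ : M → V}

private lemma free_bddAbove (o : M) {n : ℕ} (a : Fin n → ℂ) (x : Fin n → M) :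
    BddAbove {t : ℝ | ∃ g : M → ℂ, LipschitzWith 1 g ∧ g o = 0 ∧ t = ‖∑ i, a i * g (x i)‖} := by
  refine ⟨∑ i, ‖a i‖ * dist (x i) o, ?_⟩
  rintro t ⟨g, hg, hgo, rfl⟩
  calc ‖∑ i, a i * g (x i)‖ ≤ ∑ i, ‖a i * g (x i)‖ := norm_sum_le _ _
    _ ≤ ∑ i, ‖a i‖ * dist (x i) o := by
        refine Finset.sum_le_sum fun i _ => ?_
        rw [norm_mul]
        have : ‖g (x i)‖ ≤ dist (x i) o := by
          have h := hg.dist_le_mul (x i) o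
          rw [hgo] at h
          simpa [dist_eq_norm] using h
        exact mul_le_mul_of_nonneg_left this (norm_nonneg _)

/-- Key inequality: `‖∑ aᵢ g(xᵢ)‖ ≤ L ‖∑ aᵢ δ(xᵢ)‖` for `L`-Lipschitz `g` with `g o = 0`. -/
private lemma free_key (hfree : IsFreeSpace o δ) {n : ℕ} (a : Fin n → ℂ) (x : Fin n → M)
    {L : NNReal} {g : M → ℂ} (hg : LipschitzWith L g) (hgo : g o = 0) :
    ‖∑ i, a i * g (x i)‖ ≤ (L : ℝ) * ‖∑ i, a i • δ (x i)‖ := by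
  rcases eq_or_ne L 0 with rfl | hL
  · have hz : ∀ y, g y = 0 := fun y => by
      have h := hg.dist_le_mul y o
      rw [hgo] at h
      simp only [NNReal.coe_zero, zero_mul] at h
      have := dist_nonneg (x := g y) (y := (0 : ℂ))
      have : dist (g y) 0 = 0 := le_antisymm h dist_nonneg
      simpa [dist_eq_norm] using this
    simp [hz]
  · have hLpos : (0 : ℝ) < L := by positivity
    set g' : M → ℂ := fun y => ((L : ℝ) : ℂ)⁻¹ * g y with hg'
    have hlip : LipschitzWith 1 g' := LipschitzWith.of_dist_le_mul fun p q => by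
      have h1 := hg.dist_le_mul p q
      rw [dist_eq_norm] at h1 ⊢
      have : g' p - g' q = ((L : ℝ) : ℂ)⁻¹ * (g p - g q) := by rw [hg']; ring
      rw [this, norm_mul, norm_inv, Complex.norm_real, Real.norm_eq_abs,
        abs_of_pos hLpos, NNReal.coe_one, one_mul]
      rw [inv_mul_le_iff₀ hLpos]
      exact h1
    have hgo' : g' o = 0 := by simp [hg', hgo]
    have hmem : ‖∑ i, a i * g' (x i)‖ ∈
        {t : ℝ | ∃ g : M → ℂ, LipschitzWith 1 g ∧ g o = 0 ∧ t = ‖∑ i, a i * g (x i)‖} :=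
      ⟨g', hlip, hgo', rfl⟩
    have hle : ‖∑ i, a i * g' (x i)‖ ≤ ‖∑ i, a i • δ (x i)‖ := by
      rw [hfree.1 n a x]
      exact le_csSup (free_bddAbove o a x) hmem
    have heq : ‖∑ i, a i * g' (x i)‖ = ((L : ℝ))⁻¹ * ‖∑ i, a i * g (x i)‖ := by
      have : ∑ i, a i * g' (x i) = ((L : ℝ) : ℂ)⁻¹ * ∑ i, a i * g (x i) := by
        rw [Finset.mul_sum]
        exact Finset.sum_congr rfl fun i _ => by rw [hg']; ring
      rw [this, norm_mul, norm_inv, Complex.norm_real, Real.norm_eq_abs, abs_of_pos hLpos]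
    rw [heq, inv_mul_le_iff₀ hLpos] at hle
    exact hle

private lemma free_delta_o (hfree : IsFreeSpace o δ) : δ o = 0 := by
  have h := hfree.1 1 (fun _ => (1 : ℂ)) (fun _ => o)
  simp only [Fin.sum_univ_one, one_smul, one_mul] at h
  have h0 : ‖δ o‖ ≤ 0 := by
    rw [h]
    refine Real.sSup_le ?_ le_rfl
    rintro t ⟨g, hg, hgo, rfl⟩
    simp [hgo]
  exact norm_le_zero_iff.mp h0

private lemma free_delta_dist (hfree : IsFreeSpace o δ) (x y : M) :
    ‖δ x - δ y‖ ≤ dist x y := by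
  have h := hfree.1 2 ![1, -1] ![x, y]
  simp only [Fin.sum_univ_two, Matrix.cons_val_zero, Matrix.cons_val_one, Matrix.head_cons,
    one_smul, neg_smul, one_mul, neg_mul] at h
  rw [← sub_eq_add_neg] at h
  rw [h]
  refine Real.sSup_le ?_ dist_nonneg
  rintro t ⟨g, hg, hgo, rfl⟩
  rw [← sub_eq_add_neg]
  have := hg.dist_le_mul x y
  simpa [dist_eq_norm] using this

private lemma free_key_finset (hfree : IsFreeSpace o δ) (s : Finset M) (c : M → ℂ)
    {L : NNReal} {g : M → ℂ} (hg : LipschitzWith L g) (hgo : g o = 0) :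
    ‖∑ x ∈ s, c x * g x‖ ≤ (L : ℝ) * ‖∑ x ∈ s, c x • δ x‖ := by
  classical
  set e := s.equivFin with he
  have h1 : ∑ x ∈ s, c x * g x = ∑ i : Fin s.card, c (e.symm i : M) * g (e.symm i : M) :=
    (Finset.sum_coe_sort s (fun x => c x * g x)).symm.trans
      (Equiv.sum_comp e.symm (fun y : {x // x ∈ s} => c (y : M) * g (y : M))).symm
  have h2 : ∑ x ∈ s, c x • δ x = ∑ i : Fin s.card, c (e.symm i : M) • δ (e.symm i : M) :=
    (Finset.sum_coe_sort s (fun x => c x • δ x)).symm.trans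
      (Equiv.sum_comp e.symm (fun y : {x // x ∈ s} => c (y : M) • δ (y : M))).symm
  rw [h1, h2]
  exact free_key hfree _ _ hg hgo

/-- Every Lipschitz function `g : M → ℂ` vanishing at `o` induces a continuous functional on
the free space, pairing `δ x` to `g x`. -/
private lemma free_exists_functional (hfree : IsFreeSpace o δ) {L : NNReal} {g : M → ℂ}
    (hg : LipschitzWith L g) (hgo : g o = 0) :
    ∃ ψ : V →L[ℂ] ℂ, ∀ x : M, ψ (δ x) = g x := by
  classical
  set T : (M →₀ ℂ) →ₗ[ℂ] V := Finsupp.linearCombination ℂ δ with hT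
  set G : (M →₀ ℂ) →ₗ[ℂ] ℂ := Finsupp.linearCombination ℂ g with hG
  have hbound : ∀ cc : M →₀ ℂ, ‖G cc‖ ≤ (L : ℝ) * ‖T cc‖ := by
    intro cc
    have hGc : G cc = ∑ x ∈ cc.support, cc x * g x := by
      rw [hG, Finsupp.linearCombination_apply, Finsupp.sum]
      exact Finset.sum_congr rfl fun x _ => by rw [smul_eq_mul]
    have hTc : T cc = ∑ x ∈ cc.support, cc x • δ x := by
      rw [hT, Finsupp.linearCombination_apply, Finsupp.sum]
    rw [hGc, hTc]
    exact free_key_finset hfree _ _ hg hgo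
  have hker : LinearMap.ker T ≤ LinearMap.ker G := by
    intro cc hcc
    rw [LinearMap.mem_ker] at hcc ⊢
    have := hbound cc
    rw [hcc, norm_zero, mul_zero] at this
    exact norm_le_zero_iff.mp this
  set p : Submodule ℂ V := LinearMap.range T with hp
  set ψ₀ : p →ₗ[ℂ] ℂ :=
    (Submodule.liftQ (LinearMap.ker T) G hker).comp
      (LinearMap.quotKerEquivRange T).symm.toLinearMap with hψ₀
  have hψ₀_apply : ∀ cc : M →₀ ℂ, ∀ h : T cc ∈ p, ψ₀ ⟨T cc, h⟩ = G cc := by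
    intro cc h
    have h1 : (LinearMap.quotKerEquivRange T) (Submodule.Quotient.mk cc) = ⟨T cc, h⟩ := by
      ext
      exact LinearMap.quotKerEquivRange_apply_mk T cc
    have h2 : (LinearMap.quotKerEquivRange T).symm ⟨T cc, h⟩ = Submodule.Quotient.mk cc := by
      rw [← h1, LinearEquiv.symm_apply_apply]
    rw [hψ₀, LinearMap.comp_apply, LinearEquiv.coe_toLinearMap, h2, Submodule.liftQ_apply]
  have hψ₀_bound : ∀ v : p, ‖ψ₀ v‖ ≤ (L : ℝ) * ‖v‖ := by
    rintro ⟨v, hv⟩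
    obtain ⟨cc, rfl⟩ := hv
    rw [hψ₀_apply cc (LinearMap.mem_range_self T cc)]
    simpa using hbound cc
  set ψ₁ : p →L[ℂ] ℂ := LinearMap.mkContinuous ψ₀ (L : ℝ) hψ₀_bound with hψ₁
  obtain ⟨ψ, hψ, -⟩ := exists_extension_norm_eq p ψ₁
  refine ⟨ψ, fun x => ?_⟩
  have hδx : δ x = T (Finsupp.single x 1) := by
    rw [hT, Finsupp.linearCombination_single, one_smul]
  have hmem : δ x ∈ p := hδx ▸ LinearMap.mem_range_self T _
  have := hψ ⟨δ x, hmem⟩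
  rw [this]
  have : ψ₁ ⟨δ x, hmem⟩ = ψ₀ ⟨δ x, hmem⟩ := rfl
  rw [this]
  have heq : (⟨δ x, hmem⟩ : p) = ⟨T (Finsupp.single x 1), hδx ▸ hmem⟩ := by
    ext; exact hδx
  rw [heq, hψ₀_apply]
  rw [hG, Finsupp.linearCombination_single, one_smul]

end Aux

/-- For `γ ∈ F(M,ℂ)` with conjugate `γ̄` (characterized by
`⟨f, γ̄⟩ = conj ⟨conj ∘ f, γ⟩` against all functionals), setting `Re γ = (γ+γ̄)/2` and
`Im γ = (γ−γ̄)/(2i)`, one has `supp γ = supp (Re γ) ∪ supp (Im γ)`. -/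
theorem stmt_17 {M V : Type*} [MetricSpace M] [CompleteSpace M]
    [NormedAddCommGroup V] [NormedSpace ℂ V] [CompleteSpace V]
    (o : M) (δ : M → V) (hfree : IsFreeSpace o δ)
    (γ γbar : V)
    (hbar : ∀ φ ψ : V →L[ℂ] ℂ, (∀ x : M, ψ (δ x) = starRingEnd ℂ (φ (δ x))) →
      ψ γbar = starRingEnd ℂ (φ γ))
    (Reγ Imγ : V)
    (hRe : Reγ = (2⁻¹ : ℂ) • (γ + γbar))
    (hIm : Imγ = (2 * Complex.I)⁻¹ • (γ - γbar))
    (S S₁ S₂ : Set M)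
    (hS : IsSupport δ γ S) (hS₁ : IsSupport δ Reγ S₁) (hS₂ : IsSupport δ Imγ S₂) :
    S = S₁ ∪ S₂ := by
  -- γ = Reγ + I • Imγ
  have hγ : γ = Reγ + Complex.I • Imγ := by
    rw [hRe, hIm, smul_smul]
    have h2 : Complex.I * (2 * Complex.I)⁻¹ = 2⁻¹ := by
      field_simp
    rw [h2]
    match_scalars <;> norm_num
  -- γbar ∈ closed span of δ(S)
  set N : Submodule ℂ V := (Submodule.span ℂ (δ '' S)).topologicalClosure with hN
  have hNclosed : IsClosed (N : Set V) := Submodule.isClosed_topologicalClosure _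
  have hγN : γ ∈ N := hS.2.1
  have hγbarN : γbar ∈ N := by
    by_contra hc
    haveI : IsClosed ((N : Submodule ℂ V) : Set V) := hNclosed
    -- quotient separation
    set Q := V ⧸ N
    have hne : (Submodule.Quotient.mk γbar : Q) ≠ 0 := by
      rw [Ne, Submodule.Quotient.mk_eq_zero]
      exact hc
    obtain ⟨f, -, hf⟩ := exists_dual_vector ℂ (Submodule.Quotient.mk γbar : Q) (norm_ne_zero_iff.mpr hne)
    set mkC : V →L[ℂ] Q :=
      LinearMap.mkContinuous N.mkQ 1 (fun v => by
        rw [one_mul]; exact Submodule.Quotient.norm_mk_le N v) with hmkC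
    set φ : V →L[ℂ] ℂ := f.comp mkC with hφ
    have hφN : ∀ v ∈ N, φ v = 0 := by
      intro v hv
      have : mkC v = 0 := (Submodule.Quotient.mk_eq_zero N).mpr hv
      rw [hφ, ContinuousLinearMap.comp_apply, this, map_zero]
    have hφγbar : φ γbar ≠ 0 := by
      rw [hφ, ContinuousLinearMap.comp_apply]
      have : mkC γbar = (Submodule.Quotient.mk γbar : Q) := rfl
      rw [this, hf]
      exact fun h => hne (norm_eq_zero.mp (Complex.ofReal_eq_zero.mp h))
    -- construct φ' with φ' (δ x) = conj (φ (δ x))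
    set g : M → ℂ := fun x => starRingEnd ℂ (φ (δ x)) with hg
    have hδo : δ o = 0 := free_delta_o hfree
    have hgo : g o = 0 := by rw [hg]; simp [hδo]
    have hglip : LipschitzWith ‖φ‖₊ g := LipschitzWith.of_dist_le_mul fun p q => by
      rw [dist_eq_norm, hg]
      have : starRingEnd ℂ (φ (δ p)) - starRingEnd ℂ (φ (δ q)) =
          starRingEnd ℂ (φ (δ p - δ q)) := by
        rw [map_sub, map_sub]
      rw [this, RCLike.norm_conj]
      calc ‖φ (δ p - δ q)‖ ≤ ‖φ‖ * ‖δ p - δ q‖ := φ.le_opNorm _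
        _ ≤ ‖φ‖ * dist p q := by
            exact mul_le_mul_of_nonneg_left (free_delta_dist hfree p q) (norm_nonneg _)
        _ = ↑‖φ‖₊ * dist p q := by rw [coe_nnnorm]
    obtain ⟨φ', hφ'⟩ := free_exists_functional hfree hglip hgo
    have hcomm : ∀ x : M, φ (δ x) = starRingEnd ℂ (φ' (δ x)) := fun x => by
      rw [hφ' x]
      simp [hg]
    have hmain := hbar φ' φ hcomm
    -- φ' vanishes on N
    have hφ'N : N ≤ LinearMap.ker (φ' : V →ₗ[ℂ] ℂ) := by
      refine Submodule.topologicalClosure_minimal _ ?_ (ContinuousLinearMap.isClosed_ker φ')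
      rw [Submodule.span_le]
      rintro v ⟨x, hx, rfl⟩
      rw [SetLike.mem_coe, LinearMap.mem_ker]
      have hδxN : δ x ∈ N :=
        Submodule.le_topologicalClosure _ (Submodule.subset_span ⟨x, hx, rfl⟩)
      rw [ContinuousLinearMap.coe_coe, hφ' x]
      show starRingEnd ℂ (φ (δ x)) = 0
      rw [hφN _ hδxN, map_zero]
    have : φ' γ = 0 := hφ'N hγN
    rw [this, map_zero] at hmain
    exact hφγbar hmain
  -- S₁ ⊆ S and S₂ ⊆ S
  have hReN : Reγ ∈ N := by
    rw [hRe]; exact N.smul_mem _ (N.add_mem hγN hγbarN)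
  have hImN : Imγ ∈ N := by
    rw [hIm]; exact N.smul_mem _ (N.sub_mem hγN hγbarN)
  have h₁ : S₁ ⊆ S := hS₁.2.2 S hS.1 hReN
  have h₂ : S₂ ⊆ S := hS₂.2.2 S hS.1 hImN
  -- S ⊆ S₁ ∪ S₂
  have hsub : S ⊆ S₁ ∪ S₂ := by
    refine hS.2.2 (S₁ ∪ S₂) (hS₁.1.union hS₂.1) ?_
    set P : Submodule ℂ V := (Submodule.span ℂ (δ '' (S₁ ∪ S₂))).topologicalClosure with hP
    have hmono₁ : (Submodule.span ℂ (δ '' S₁)).topologicalClosure ≤ P :=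
      Submodule.topologicalClosure_mono
        (Submodule.span_mono (Set.image_mono Set.subset_union_left))
    have hmono₂ : (Submodule.span ℂ (δ '' S₂)).topologicalClosure ≤ P :=
      Submodule.topologicalClosure_mono
        (Submodule.span_mono (Set.image_mono Set.subset_union_right))
    rw [hγ]
    exact P.add_mem (hmono₁ hS₁.2.1) (P.smul_mem _ (hmono₂ hS₂.2.1))
  exact le_antisymm hsub (Set.union_subset h₁ h₂)
end

section
/- Let M, N be complete pointed metric spaces and f : M → N a base-point preserving Lipschitz map such that the induced operator f̂ : F(M) → F(N) (determined by δ(x) ↦ δ(f(x))) is compact. If M is unbounded, then lim_{d(x,y)→+∞} d(f(x),f(y))/d(x,y) = 0, i.e. for every ε > 0 there exists R > 0 such that d(x,y) ≥ R implies d(f(x),f(y)) ≤ ε·d(x,y). -/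
lemma free_norm_le {M V : Type*} [MetricSpace M] [NormedAddCommGroup V] [NormedSpace ℂ V]
    {o : M} {δ : M → V} (h : IsFreeSpace o δ) (x y : M) :
    ‖δ x - δ y‖ ≤ dist x y := by
  have h2 := h.1 2 ![1, -1] ![x, y]
  rw [show (∑ i, (![(1:ℂ), -1]) i • δ (![x, y] i)) = δ x - δ y by
    simp [Fin.sum_univ_two, sub_eq_add_neg]] at h2
  rw [h2]
  apply Real.sSup_le _ dist_nonneg
  rintro t ⟨g, hg, hg0, rfl⟩
  have e : ∑ i, (![(1:ℂ), -1]) i * g (![x, y] i) = g x - g y := by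
    simp [Fin.sum_univ_two, sub_eq_add_neg]
  rw [e]
  calc ‖g x - g y‖ = dist (g x) (g y) := (dist_eq_norm _ _).symm
    _ ≤ 1 * dist x y := hg.dist_le_mul x y
    _ = dist x y := one_mul _

lemma free_eval_le {M V : Type*} [MetricSpace M] [NormedAddCommGroup V] [NormedSpace ℂ V]
    {o : M} {δ : M → V} (h : IsFreeSpace o δ) {g : M → ℂ} (hg : LipschitzWith 1 g)
    (hg0 : g o = 0) (n : ℕ) (a : Fin n → ℂ) (x : Fin n → M) :
    ‖∑ i, a i * g (x i)‖ ≤ ‖∑ i, a i • δ (x i)‖ := by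
  rw [h.1 n a x]
  apply le_csSup
  · refine ⟨∑ i, ‖a i‖ * dist (x i) o, ?_⟩
    rintro t ⟨g', hg', hg'0, rfl⟩
    calc ‖∑ i, a i * g' (x i)‖ ≤ ∑ i, ‖a i * g' (x i)‖ := norm_sum_le _ _
      _ ≤ ∑ i, ‖a i‖ * dist (x i) o := by
          apply Finset.sum_le_sum
          intro i _
          rw [norm_mul]
          gcongr
          calc ‖g' (x i)‖ = dist (g' (x i)) (g' o) := by rw [hg'0, dist_zero_right]
            _ ≤ 1 * dist (x i) o := hg'.dist_le_mul _ _
            _ = dist (x i) o := one_mul _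
  · exact ⟨g, hg, hg0, rfl⟩

lemma sep_aux {N VN : Type*} [MetricSpace N] [NormedAddCommGroup VN] [NormedSpace ℂ VN]
    {oN : N} {δN : N → VN} (hfN : IsFreeSpace oN δN)
    (u v u' v' : N) (s s' : ℝ) (hs : 0 < s) (w : N) (hw : w = u ∨ w = v)
    (hd2 : dist u v / 2 ≤ dist w oN)
    (hu' : dist u' oN ≤ dist u v / 8) (hv' : dist v' oN ≤ dist u v / 8) :
    dist u v / (4 * s) ≤
      ‖((s⁻¹ : ℝ) : ℂ) • (δN u - δN v) - ((s'⁻¹ : ℝ) : ℂ) • (δN u' - δN v')‖ := by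
  set d : ℝ := dist u v with hd
  have hd0 : 0 ≤ d := dist_nonneg
  set g : N → ℂ := fun z => ((max (d / 4 - dist z w) 0 : ℝ) : ℂ) with hgdef
  have hlip1 : LipschitzWith 1 (fun r : ℝ => max (d / 4 - r) 0) := by
    apply LipschitzWith.of_dist_le_mul
    intro a b
    simp only [Real.dist_eq, NNReal.coe_one, one_mul]
    calc |max (d/4 - a) 0 - max (d/4 - b) 0| ≤ |(d/4 - a) - (d/4 - b)| :=
          abs_max_sub_max_le_abs _ _ _
      _ = |a - b| := by rw [show (d/4 - a) - (d/4 - b) = -(a - b) by ring, abs_neg]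
  have hglip : LipschitzWith 1 g := by
    have := Complex.isometry_ofReal.lipschitz.comp (hlip1.comp (LipschitzWith.dist_left w))
    rw [mul_one, mul_one] at this
    exact this
  have hg0 : g oN = 0 := by
    have h1 : d / 4 - dist oN w ≤ 0 := by rw [dist_comm]; linarith
    simp [hgdef, max_eq_right h1]
  have hgw : g w = ((d / 4 : ℝ) : ℂ) := by
    simp [hgdef, max_eq_left (by linarith : (0:ℝ) ≤ d / 4)]
  have hgfar : ∀ z : N, d / 4 ≤ dist z w → g z = 0 := by
    intro z hz
    have h1 : d / 4 - dist z w ≤ 0 := by linarith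
    simp [hgdef, max_eq_right h1]
  have hgu' : g u' = 0 := by
    apply hgfar
    have h1 : dist w oN ≤ dist w u' + dist u' oN := dist_triangle _ _ _
    have h2 : dist u' w = dist w u' := dist_comm _ _
    linarith
  have hgv' : g v' = 0 := by
    apply hgfar
    have h1 : dist w oN ≤ dist w v' + dist v' oN := dist_triangle _ _ _
    have h2 : dist v' w = dist w v' := dist_comm _ _
    linarith
  set a : Fin 4 → ℂ := ![((s⁻¹ : ℝ) : ℂ), -((s⁻¹ : ℝ) : ℂ), -((s'⁻¹ : ℝ) : ℂ), ((s'⁻¹ : ℝ) : ℂ)]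
    with ha
  set z : Fin 4 → N := ![u, v, u', v'] with hz
  have hvec : ∑ i, a i • δN (z i) =
      ((s⁻¹ : ℝ) : ℂ) • (δN u - δN v) - ((s'⁻¹ : ℝ) : ℂ) • (δN u' - δN v') := by
    simp only [ha, hz, Fin.sum_univ_four, Matrix.cons_val_zero, Matrix.cons_val_one,
      Matrix.head_cons, Matrix.cons_val_two, Matrix.tail_cons, Matrix.cons_val_three,
      smul_sub, neg_smul]
    abel
  have hval : (∑ i, a i * g (z i)) = ((s⁻¹ : ℝ) : ℂ) * ((d/4 : ℝ) : ℂ) ∨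
      (∑ i, a i * g (z i)) = -(((s⁻¹ : ℝ) : ℂ) * ((d/4 : ℝ) : ℂ)) := by
    rcases hw with hw | hw
    · left
      have hgu : g u = ((d/4 : ℝ) : ℂ) := by rw [← hw]; exact hgw
      have hgv : g v = 0 := by
        apply hgfar; rw [hw, dist_comm]; linarith
      simp [ha, hz, Fin.sum_univ_four, hgu, hgv, hgu', hgv']
    · right
      have hgv : g v = ((d/4 : ℝ) : ℂ) := by rw [← hw]; exact hgw
      have hgu : g u = 0 := by
        apply hgfar; rw [hw]; linarith
      simp [ha, hz, Fin.sum_univ_four, hgu, hgv, hgu', hgv']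
  have hc : ‖(((s⁻¹ : ℝ) : ℂ) * ((d/4 : ℝ) : ℂ))‖ = d / (4 * s) := by
    rw [norm_mul, Complex.norm_real, Complex.norm_real, Real.norm_eq_abs, Real.norm_eq_abs,
      abs_of_nonneg (inv_nonneg.2 hs.le), abs_of_nonneg (by linarith : (0:ℝ) ≤ d/4)]
    rw [mul_comm s⁻¹ (d/4), ← div_eq_mul_inv, div_div]
  have hnormval : ‖∑ i, a i * g (z i)‖ = d / (4 * s) := by
    rcases hval with h | h
    · rw [h, hc]
    · rw [h, norm_neg, hc]
  calc d / (4 * s) = ‖∑ i, a i * g (z i)‖ := hnormval.symm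
    _ ≤ ‖∑ i, a i • δN (z i)‖ := free_eval_le hfN hglip hg0 4 a z
    _ = _ := by rw [hvec]

/-- If `f : M → N` is a base-point preserving Lipschitz map between complete
pointed metric spaces whose induced operator `f̂ : F(M) → F(N)` is compact and `M` is
unbounded, then `d(f(x),f(y))/d(x,y) → 0` as `d(x,y) → ∞`. -/
theorem stmt_19 {M N VM VN : Type*} [MetricSpace M] [CompleteSpace M]
    [MetricSpace N] [CompleteSpace N]
    [NormedAddCommGroup VM] [NormedSpace ℂ VM] [CompleteSpace VM]
    [NormedAddCommGroup VN] [NormedSpace ℂ VN] [CompleteSpace VN]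
    (oM : M) (oN : N) (δM : M → VM) (δN : N → VN)
    (hfM : IsFreeSpace oM δM) (hfN : IsFreeSpace oN δN)
    (f : M → N) (hf : ∃ K, LipschitzWith K f) (hf0 : f oM = oN)
    (fhat : VM →L[ℂ] VN) (hfhat : ∀ x : M, fhat (δM x) = δN (f x))
    (hcpt : IsCompactOperator fhat)
    (hunbdd : ¬ Bornology.IsBounded (Set.univ : Set M)) :
    ∀ ε : ℝ, 0 < ε → ∃ R : ℝ, 0 < R ∧ ∀ x y : M, R ≤ dist x y →
      dist (f x) (f y) ≤ ε * dist x y := by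
  intro ε hε
  by_contra hcon
  push_neg at hcon
  have hPex : ∀ R : ℝ, ∃ p : M × M,
      max R 1 ≤ dist p.1 p.2 ∧ ε * dist p.1 p.2 < dist (f p.1) (f p.2) := by
    intro R
    obtain ⟨x, y, h1, h2⟩ := hcon (max R 1) (lt_of_lt_of_le one_pos (le_max_right _ _))
    exact ⟨(x, y), h1, h2⟩
  choose P hP1 hP2 using hPex
  set B : M × M → ℝ := fun p => max (dist (f p.1) oN) (dist (f p.2) oN) with hBdef
  let q : ℕ → ℝ × (M × M) := fun k => Nat.rec (max (B (P 1)) 1, P 1)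
      (fun _ prev => (max (B (P (8 * prev.1 / ε))) prev.1, P (8 * prev.1 / ε))) k
  set x : ℕ → M := fun k => (q k).2.1 with hxdef
  set y : ℕ → M := fun k => (q k).2.2 with hydef
  set t : ℕ → ℝ := fun k => dist (x k) (y k) with htdef
  have hc1 : ∀ k, 1 ≤ (q k).1 := by
    intro k
    induction k with
    | zero => exact le_max_right _ _
    | succ k ih => exact ih.trans (le_max_right _ _)
  have hcmono : Monotone fun k => (q k).1 :=
    monotone_nat_of_le_succ fun k => le_max_right _ _
  have ht1 : ∀ k, 1 ≤ t k := by
    intro k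
    cases k with
    | zero => exact le_trans (le_max_right 1 1) (hP1 1)
    | succ k => exact le_trans (le_max_right (8 * (q k).1 / ε) 1) (hP1 (8 * (q k).1 / ε))
  have htpos : ∀ k, 0 < t k := fun k => lt_of_lt_of_le one_pos (ht1 k)
  have hεt : ∀ k, ε * t k < dist (f (x k)) (f (y k)) := by
    intro k
    cases k with
    | zero => exact hP2 1
    | succ k => exact hP2 (8 * (q k).1 / ε)
  have hgrow : ∀ k, 8 * (q k).1 ≤ ε * t (k + 1) := by
    intro k
    have h1 : 8 * (q k).1 / ε ≤ t (k + 1) :=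
      le_trans (le_max_left _ 1) (hP1 (8 * (q k).1 / ε))
    rw [div_le_iff₀ hε] at h1
    linarith
  set m : ℕ → VM := fun k => (((t k)⁻¹ : ℝ) : ℂ) • (δM (x k) - δM (y k)) with hmdef
  have hmnorm : ∀ k, ‖m k‖ ≤ 1 := by
    intro k
    rw [hmdef]
    rw [norm_smul]
    have h1 : ‖(((t k)⁻¹ : ℝ) : ℂ)‖ = (t k)⁻¹ := by
      rw [Complex.norm_real, Real.norm_eq_abs, abs_of_nonneg (inv_nonneg.2 (htpos k).le)]
    rw [h1]
    calc (t k)⁻¹ * ‖δM (x k) - δM (y k)‖ ≤ (t k)⁻¹ * t k := by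
          gcongr
          exact free_norm_le hfM _ _
      _ = 1 := inv_mul_cancel₀ (htpos k).ne'
  have himg : ∀ k, fhat (m k) = (((t k)⁻¹ : ℝ) : ℂ) • (δN (f (x k)) - δN (f (y k))) := by
    intro k
    rw [hmdef, map_smul, map_sub, hfhat, hfhat]
  have hsep : ∀ j k, j < k → ε / 4 ≤ ‖fhat (m k) - fhat (m j)‖ := by
    intro j k hjk
    obtain ⟨k', rfl⟩ : ∃ k', k = k' + 1 := ⟨k - 1, by omega⟩
    have hjk' : j ≤ k' := by omega
    set dk : ℝ := dist (f (x (k' + 1))) (f (y (k' + 1))) with hdk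
    have hdk8 : 8 * (q j).1 ≤ dk := by
      have hm := hcmono hjk'
      have h1 := hgrow k'
      have h2 := (hεt (k' + 1)).le
      simp only at hm
      linarith
    have hcj := hc1 j
    have huj : dist (f (x j)) oN ≤ dk / 8 := by
      have h1 : dist (f (x j)) oN ≤ B (q j).2 := le_max_left _ _
      have h2 : B (q j).2 ≤ (q j).1 := by
        cases j with
        | zero => exact le_max_left _ _
        | succ j => exact le_max_left _ _
      linarith
    have hvj : dist (f (y j)) oN ≤ dk / 8 := by
      have h1 : dist (f (y j)) oN ≤ B (q j).2 := le_max_right _ _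
      have h2 : B (q j).2 ≤ (q j).1 := by
        cases j with
        | zero => exact le_max_left _ _
        | succ j => exact le_max_left _ _
      linarith
    have hdtri : dk ≤ dist (f (x (k' + 1))) oN + dist (f (y (k' + 1))) oN := by
      calc dk ≤ dist (f (x (k' + 1))) oN + dist oN (f (y (k' + 1))) := dist_triangle _ _ _
        _ = _ := by rw [dist_comm oN]
    have hkey : dk / (4 * t (k' + 1)) ≤ ‖fhat (m (k' + 1)) - fhat (m j)‖ := by
      rw [himg (k' + 1), himg j]
      rcases le_total (dist (f (x (k' + 1))) oN) (dist (f (y (k' + 1))) oN) with hcase | hcase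
      · exact sep_aux hfN _ _ _ _ _ _ (htpos (k' + 1)) (f (y (k' + 1))) (Or.inr rfl)
          (by linarith) huj hvj
      · exact sep_aux hfN _ _ _ _ _ _ (htpos (k' + 1)) (f (x (k' + 1))) (Or.inl rfl)
          (by linarith) huj hvj
    refine le_trans ?_ hkey
    rw [div_le_div_iff₀ (by norm_num) (mul_pos (by norm_num) (htpos (k' + 1)))]
    have h2 := hεt (k' + 1)
    nlinarith [htpos (k' + 1)]
  have hcpt' : IsCompactOperator (fhat.toLinearMap : VM →ₗ[ℂ] VN) := hcpt
  obtain ⟨K, hK, hKsub⟩ := hcpt'.image_closedBall_subset_compact 1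
  have hmem : ∀ k, (fun k => fhat (m k)) k ∈ K := by
    intro k
    apply hKsub
    exact ⟨m k, by simpa [Metric.mem_closedBall, dist_zero_right] using hmnorm k, rfl⟩
  obtain ⟨A, -, φ, hφ, hconv⟩ := hK.tendsto_subseq hmem
  rw [Metric.tendsto_atTop] at hconv
  obtain ⟨n0, hn0⟩ := hconv (ε / 8) (by linarith)
  have h1 := hn0 n0 le_rfl
  have h2 := hn0 (n0 + 1) (Nat.le_succ _)
  simp only [Function.comp] at h1 h2
  have hlt : dist (fhat (m (φ (n0 + 1)))) (fhat (m (φ n0))) < ε / 4 := by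
    calc dist (fhat (m (φ (n0 + 1)))) (fhat (m (φ n0)))
        ≤ dist (fhat (m (φ (n0 + 1)))) A + dist A (fhat (m (φ n0))) := dist_triangle _ _ _
      _ < ε / 8 + ε / 8 := by
          rw [dist_comm A]
          exact add_lt_add h2 h1
      _ = ε / 4 := by ring
  have hge := hsep (φ n0) (φ (n0 + 1)) (hφ (Nat.lt_succ_self n0))
  rw [← dist_eq_norm] at hge
  linarith
end
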